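/- Let ψ_A and ψ_B be pure states on multipartite Hilbert spaces H_A and H_B with local observable sets M_A and M_B, respectively. Then the commutation matrix of the product state ψ_A ⊗ ψ_B with respect to the combined observable set (each observable of M_A extended by the identity on H_B and vice versa) is the direct sum γ_C(|ψ_A⟩⟨ψ_A|, M_A) ⊕ γ_C(|ψ_B⟩⟨ψ_B|, M_B): every cross entry between an observable supported in H_A and one supported in H_B vanishes. Consequently Γ_C(ψ_A ⊗ ψ_B) = max( Γ_C(ψ_A), Γ_C(ψ_B) ). -/

import Mathlib

open Matrix BigOperators
open scoped ComplexOrder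

noncomputable section

/-- Commutator of two square matrices. -/
def mComm {d : Type*} [Fintype d] (A B : Matrix d d ℂ) : Matrix d d ℂ := A * B - B * A

/-- Commutation matrix `γ_C(ρ, M)` built from the square root `s = √ρ` of a density
matrix (for a pure state `ρ = |ψ⟩⟨ψ|`, `√ρ = ρ`), with entries
`γ_C(ρ,M)_{μν} = −tr([M_μ,√ρ][M_ν,√ρ])`. -/
def gammaC {d ι : Type*} [Fintype d] (s : Matrix d d ℂ) (M : ι → Matrix d d ℂ) :
    Matrix ι ι ℝ :=
  fun μ ν => (-(Matrix.trace (mComm (M μ) s * mComm (M ν) s))).re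

/-- Largest eigenvalue of a (finite, real symmetric) matrix. -/
def maxEig {ι : Type*} [Fintype ι] (G : Matrix ι ι ℝ) : ℝ :=
  sSup {c : ℝ | ∃ v : ι → ℝ, v ≠ 0 ∧ G.mulVec v = c • v}

/-- The operator acting as `A` on cell `i` and as the identity on all other cells. -/
def localOp {N : ℕ} (n : Fin N → ℕ) (i : Fin N)
    (A : Matrix (Fin (n i)) (Fin (n i)) ℂ) :
    Matrix ((j : Fin N) → Fin (n j)) ((j : Fin N) → Fin (n j)) ℂ :=
  fun x y => A (x i) (y i) * ∏ j ∈ Finset.univ.erase i, (if x j = y j then 1 else 0)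

/-- The local observable set built from a choice `A i α` of Hermitian bases of the
individual cells. -/
def obsFamily {N : ℕ} (n : Fin N → ℕ)
    (A : ∀ i : Fin N, Fin (n i ^ 2) → Matrix (Fin (n i)) (Fin (n i)) ℂ) :
    ((i : Fin N) × Fin (n i ^ 2)) →
      Matrix ((j : Fin N) → Fin (n j)) ((j : Fin N) → Fin (n j)) ℂ :=
  fun μ => localOp n μ.1 (A μ.1 μ.2)

/-- Extension of an operator on `H_A` by the identity on `H_B`. -/
def extA {dA dB : Type*} [DecidableEq dB] (X : Matrix dA dA ℂ) :
    Matrix (dA × dB) (dA × dB) ℂ :=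
  fun p q => X p.1 q.1 * (if p.2 = q.2 then 1 else 0)

/-- Extension of an operator on `H_B` by the identity on `H_A`. -/
def extB {dA dB : Type*} [DecidableEq dA] (X : Matrix dB dB ℂ) :
    Matrix (dA × dB) (dA × dB) ℂ :=
  fun p q => X p.2 q.2 * (if p.1 = q.1 then 1 else 0)

/-!
For `ρ = ρ_A ⊗ ρ_B` one has `[X ⊗ 1, ρ] = [X, ρ_A] ⊗ ρ_B` and `[1 ⊗ Y, ρ] = ρ_A ⊗ [Y, ρ_B]`, and the
trace is multiplicative on Kronecker products. A diagonal block therefore picks up the factor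
`tr ρ_B² = 1` (purity), while a cross entry carries the factor `tr ([X, ρ_A] ρ_A) = 0`, which
vanishes by cyclicity of the trace. The spectrum of a block-diagonal matrix is the union of the
spectra of its blocks; since commutation matrices are positive semidefinite, their spectra are
nonnegative, which keeps `max` correct even when a block is empty and its `sSup` is `0`.
-/

open scoped Kronecker

namespace Matrix

lemma sub_kronecker {l m n p R : Type*} [Ring R] (A B : Matrix l m R) (C : Matrix n p R) :
    (A - B) ⊗ₖ C = A ⊗ₖ C - B ⊗ₖ C := by
  ext; simp [sub_mul]

lemma kronecker_sub {l m n p R : Type*} [Ring R] (A : Matrix l m R) (B C : Matrix n p R) :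
    A ⊗ₖ (B - C) = A ⊗ₖ B - A ⊗ₖ C := by
  ext; simp [mul_sub]

lemma spectrum_fromBlocks_zero {R m n : Type*} [CommRing R] [Fintype m] [Fintype n]
    [DecidableEq m] [DecidableEq n] (A : Matrix m m R) (D : Matrix n n R) :
    spectrum R (fromBlocks A 0 0 D) = spectrum R A ∪ spectrum R D := by
  ext c
  simp only [spectrum.mem_iff, Set.mem_union, isUnit_iff_isUnit_det, Algebra.algebraMap_eq_smul_one,
    ← fromBlocks_one, fromBlocks_smul, sub_eq_add_neg, fromBlocks_neg, fromBlocks_add, smul_zero,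
    neg_zero, add_zero, det_fromBlocks_zero₂₁, IsUnit.mul_iff, not_and_or]

end Matrix

lemma Real.sSup_union_of_nonneg {s t : Set ℝ} (hs : BddAbove s) (ht : BddAbove t)
    (hs₀ : ∀ x ∈ s, 0 ≤ x) (ht₀ : ∀ x ∈ t, 0 ≤ x) :
    sSup (s ∪ t) = max (sSup s) (sSup t) := by
  rcases s.eq_empty_or_nonempty with rfl | hsne
  · rw [Set.empty_union, Real.sSup_empty, max_eq_right (Real.sSup_nonneg ht₀)]
  rcases t.eq_empty_or_nonempty with rfl | htne
  · rw [Set.union_empty, Real.sSup_empty, max_eq_left (Real.sSup_nonneg hs₀)]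
  exact csSup_union hs hsne ht htne

lemma maxEig_eq_sSup_spectrum {ι : Type*} [Fintype ι] [DecidableEq ι] (G : Matrix ι ι ℝ) :
    maxEig G = sSup (spectrum ℝ G) := by
  rw [maxEig, ← spectrum_toLin']
  congr 1
  ext c
  rw [Set.mem_ofPred_eq, ← Module.End.hasEigenvalue_iff_mem_spectrum, Module.End.hasEigenvalue_iff,
    Submodule.ne_bot_iff]
  simp only [Module.End.mem_eigenspace_iff, toLin'_apply]
  tauto

lemma maxEig_fromBlocks {m n : Type*} [Fintype m] [Fintype n] [DecidableEq m] [DecidableEq n]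
    {A : Matrix m m ℝ} {D : Matrix n n ℝ} (hA : A.PosSemidef) (hD : D.PosSemidef) :
    maxEig (fromBlocks A 0 0 D) = max (maxEig A) (maxEig D) := by
  simp only [maxEig_eq_sSup_spectrum, spectrum_fromBlocks_zero]
  exact Real.sSup_union_of_nonneg finite_real_spectrum.bddAbove finite_real_spectrum.bddAbove
    (posSemidef_iff_isHermitian_and_spectrum_nonneg.mp hA).2
    (posSemidef_iff_isHermitian_and_spectrum_nonneg.mp hD).2

section Commutator

variable {d : Type*} [Fintype d]

lemma mComm_conjTranspose {X s : Matrix d d ℂ} (hX : X.IsHermitian) (hs : s.IsHermitian) :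
    (mComm X s)ᴴ = -mComm X s := by
  simp only [mComm, conjTranspose_sub, conjTranspose_mul, hX.eq, hs.eq, neg_sub]

lemma trace_mComm_mul_self (X s : Matrix d d ℂ) : trace (mComm X s * s) = 0 := by
  rw [mComm, sub_mul, trace_sub, Matrix.mul_assoc, trace_mul_cycle, trace_mul_comm X, sub_self]

lemma gammaC_posSemidef {ι : Type*} [Fintype ι] {s : Matrix d d ℂ} (hs : s.IsHermitian)
    {M : ι → Matrix d d ℂ} (hM : ∀ μ, (M μ).IsHermitian) : (gammaC s M).PosSemidef := by
  refine .of_dotProduct_mulVec_nonneg ?_ fun v => ?_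
  · ext μ ν
    simp only [conjTranspose_apply, star_trivial, gammaC, trace_mul_comm (mComm (M ν) s)]
  -- the commutators are anti-Hermitian, so `γ` is the real Gram matrix `Re tr (C_μᴴ C_ν)`
  set C := fun μ => mComm (M μ) s
  set D : Matrix d d ℂ := ∑ μ, (v μ : ℂ) • C μ
  have hD : Dᴴ = ∑ μ, (v μ : ℂ) • -C μ := by
    simp only [D, conjTranspose_sum, conjTranspose_smul, Complex.star_def, Complex.conj_ofReal,
      C, mComm_conjTranspose (hM _) hs]
  have hquad : star v ⬝ᵥ gammaC s M *ᵥ v = (trace (Dᴴ * D)).re := by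
    rw [hD, Finset.sum_mul_sum]
    simp only [trace_sum, smul_mul_smul_comm, trace_smul, Matrix.neg_mul, trace_neg, dotProduct,
      mulVec, gammaC, Complex.re_sum, Finset.mul_sum, star_trivial, smul_eq_mul]
    refine Finset.sum_congr rfl fun μ _ => Finset.sum_congr rfl fun ν _ => ?_
    simp only [C, mul_neg, ← Complex.ofReal_mul, Complex.neg_re, Complex.re_ofReal_mul]
    ring
  rw [hquad]
  exact (Complex.nonneg_iff.mp (posSemidef_conjTranspose_mul_self D).trace_nonneg).1

variable {dA dB : Type*} [Fintype dA] [Fintype dB]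

lemma mComm_kronecker_one [DecidableEq dB] (X ρA : Matrix dA dA ℂ) (ρB : Matrix dB dB ℂ) :
    mComm (X ⊗ₖ 1) (ρA ⊗ₖ ρB) = mComm X ρA ⊗ₖ ρB := by
  simp only [mComm, ← mul_kronecker_mul, one_mul, mul_one, sub_kronecker]

lemma mComm_one_kronecker [DecidableEq dA] (Y ρB : Matrix dB dB ℂ) (ρA : Matrix dA dA ℂ) :
    mComm (1 ⊗ₖ Y) (ρA ⊗ₖ ρB) = ρA ⊗ₖ mComm Y ρB := by
  simp only [mComm, ← mul_kronecker_mul, one_mul, mul_one, kronecker_sub]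

lemma gammaC_kronecker [DecidableEq dA] [DecidableEq dB] {ιA ιB : Type*}
    {ρA : Matrix dA dA ℂ} {ρB : Matrix dB dB ℂ}
    (hA : trace (ρA * ρA) = 1) (hB : trace (ρB * ρB) = 1)
    (MA : ιA → Matrix dA dA ℂ) (MB : ιB → Matrix dB dB ℂ) :
    gammaC (ρA ⊗ₖ ρB) (Sum.elim (fun μ => MA μ ⊗ₖ 1) (fun ν => 1 ⊗ₖ MB ν))
      = fromBlocks (gammaC ρA MA) 0 0 (gammaC ρB MB) := by
  ext (μ | μ) (ν | ν) <;>
    simp only [gammaC, Sum.elim_inl, Sum.elim_inr, fromBlocks_apply₁₁, fromBlocks_apply₁₂,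
      fromBlocks_apply₂₁, fromBlocks_apply₂₂, mComm_kronecker_one, mComm_one_kronecker,
      ← mul_kronecker_mul, trace_kronecker, hA, hB, trace_mComm_mul_self,
      mul_one, one_mul, mul_zero, zero_mul, neg_zero, Complex.zero_re, Matrix.zero_apply]

end Commutator

lemma trace_vecMulVec_mul_self {d : Type*} [Fintype d] {ψ : d → ℂ} (hψ : star ψ ⬝ᵥ ψ = 1) :
    trace (vecMulVec ψ (star ψ) * vecMulVec ψ (star ψ)) = 1 := by
  rw [vecMulVec_mul_vecMulVec, hψ, one_smul, trace_vecMulVec, dotProduct_comm, hψ]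

lemma vecMulVec_kronecker {dA dB : Type*} (ψA : dA → ℂ) (ψB : dB → ℂ) :
    vecMulVec ψA (star ψA) ⊗ₖ vecMulVec ψB (star ψB)
      = vecMulVec (fun p : dA × dB => ψA p.1 * ψB p.2) (star fun p => ψA p.1 * ψB p.2) := by
  ext
  simp only [kroneckerMap_apply, vecMulVec_apply, Pi.star_apply, star_mul]
  ring

lemma extA_eq_kronecker_one {dA dB : Type*} [DecidableEq dB] (X : Matrix dA dA ℂ) :
    (extA X : Matrix (dA × dB) (dA × dB) ℂ) = X ⊗ₖ 1 := by
  ext; simp [extA, one_apply]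

lemma extB_eq_one_kronecker {dA dB : Type*} [DecidableEq dA] (Y : Matrix dB dB ℂ) :
    (extB Y : Matrix (dA × dB) (dA × dB) ℂ) = 1 ⊗ₖ Y := by
  ext; simp [extB, one_apply, mul_comm]

lemma localOp_isHermitian {N : ℕ} (n : Fin N → ℕ) (i : Fin N)
    {A : Matrix (Fin (n i)) (Fin (n i)) ℂ} (hA : A.IsHermitian) :
    (localOp n i A).IsHermitian := by
  ext x y
  simp only [conjTranspose_apply, localOp, star_mul', star_prod, hA.apply]
  congr 1
  refine Finset.prod_congr rfl fun j _ => ?_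
  simp [eq_comm]

theorem gammaC_of_product_state_general
    {NA NB : ℕ} {nA : Fin NA → ℕ} {nB : Fin NB → ℕ}
    (AA : ∀ i : Fin NA, Fin (nA i ^ 2) → Matrix (Fin (nA i)) (Fin (nA i)) ℂ)
    (hAAh : ∀ i α, (AA i α).IsHermitian)
    (AB : ∀ i : Fin NB, Fin (nB i ^ 2) → Matrix (Fin (nB i)) (Fin (nB i)) ℂ)
    (hABh : ∀ i α, (AB i α).IsHermitian)
    (ψA : ((j : Fin NA) → Fin (nA j)) → ℂ) (hψA : star ψA ⬝ᵥ ψA = 1)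
    (ψB : ((j : Fin NB) → Fin (nB j)) → ℂ) (hψB : star ψB ⬝ᵥ ψB = 1)
    (ψAB : (((j : Fin NA) → Fin (nA j)) × ((j : Fin NB) → Fin (nB j))) → ℂ)
    (hψAB : ∀ p, ψAB p = ψA p.1 * ψB p.2) :
    gammaC (vecMulVec ψAB (star ψAB))
        (Sum.elim (fun μ => extA (obsFamily nA AA μ)) (fun ν => extB (obsFamily nB AB ν)))
      = Matrix.fromBlocks
          (gammaC (vecMulVec ψA (star ψA)) (obsFamily nA AA)) 0 0
          (gammaC (vecMulVec ψB (star ψB)) (obsFamily nB AB)) ∧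
    maxEig (gammaC (vecMulVec ψAB (star ψAB))
        (Sum.elim (fun μ => extA (obsFamily nA AA μ)) (fun ν => extB (obsFamily nB AB ν))))
      = max (maxEig (gammaC (vecMulVec ψA (star ψA)) (obsFamily nA AA)))
          (maxEig (gammaC (vecMulVec ψB (star ψB)) (obsFamily nB AB))) := by
  obtain rfl : ψAB = fun p => ψA p.1 * ψB p.2 := funext hψAB
  have hblocks := gammaC_kronecker (trace_vecMulVec_mul_self hψA) (trace_vecMulVec_mul_self hψB)
    (obsFamily nA AA) (obsFamily nB AB)
  simp only [vecMulVec_kronecker, ← extA_eq_kronecker_one, ← extB_eq_one_kronecker] at hblocks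
  refine ⟨hblocks, ?_⟩
  rw [hblocks]
  exact maxEig_fromBlocks
    (gammaC_posSemidef (posSemidef_vecMulVec_self_star ψA).isHermitian
      fun μ => localOp_isHermitian nA μ.1 (hAAh μ.1 μ.2))
    (gammaC_posSemidef (posSemidef_vecMulVec_self_star ψB).isHermitian
      fun μ => localOp_isHermitian nB μ.1 (hABh μ.1 μ.2))

/-- For pure states `ψ_A`, `ψ_B` on multipartite spaces `H_A`, `H_B`
with local observable sets `M_A`, `M_B`, the commutation matrix of the product state
`ψ_A ⊗ ψ_B` with respect to the combined observable set (each observable of `M_A`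
extended by the identity on `H_B` and vice versa) is the direct sum
`γ_C(|ψ_A⟩⟨ψ_A|, M_A) ⊕ γ_C(|ψ_B⟩⟨ψ_B|, M_B)` — every cross entry vanishes —
and consequently `Γ_C(ψ_A ⊗ ψ_B) = max(Γ_C(ψ_A), Γ_C(ψ_B))`. -/
theorem gammaC_of_product_state
    {NA NB : ℕ} {nA : Fin NA → ℕ} {nB : Fin NB → ℕ}
    (AA : ∀ i : Fin NA, Fin (nA i ^ 2) → Matrix (Fin (nA i)) (Fin (nA i)) ℂ)
    (hAAh : ∀ i α, (AA i α).IsHermitian)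
    (hAAo : ∀ i α β, Matrix.trace (AA i α * AA i β) = if α = β then 1 else 0)
    (AB : ∀ i : Fin NB, Fin (nB i ^ 2) → Matrix (Fin (nB i)) (Fin (nB i)) ℂ)
    (hABh : ∀ i α, (AB i α).IsHermitian)
    (hABo : ∀ i α β, Matrix.trace (AB i α * AB i β) = if α = β then 1 else 0)
    (ψA : ((j : Fin NA) → Fin (nA j)) → ℂ) (hψA : star ψA ⬝ᵥ ψA = 1)
    (ψB : ((j : Fin NB) → Fin (nB j)) → ℂ) (hψB : star ψB ⬝ᵥ ψB = 1)
    (ψAB : (((j : Fin NA) → Fin (nA j)) × ((j : Fin NB) → Fin (nB j))) → ℂ)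
    (hψAB : ∀ p, ψAB p = ψA p.1 * ψB p.2) :
    gammaC (vecMulVec ψAB (star ψAB))
        (Sum.elim (fun μ => extA (obsFamily nA AA μ)) (fun ν => extB (obsFamily nB AB ν)))
      = Matrix.fromBlocks
          (gammaC (vecMulVec ψA (star ψA)) (obsFamily nA AA)) 0 0
          (gammaC (vecMulVec ψB (star ψB)) (obsFamily nB AB)) ∧
    maxEig (gammaC (vecMulVec ψAB (star ψAB))
        (Sum.elim (fun μ => extA (obsFamily nA AA μ)) (fun ν => extB (obsFamily nB AB ν))))
      = max (maxEig (gammaC (vecMulVec ψA (star ψA)) (obsFamily nA AA)))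
          (maxEig (gammaC (vecMulVec ψB (star ψB)) (obsFamily nB AB))) :=
  gammaC_of_product_state_general AA hAAh AB hABh ψA hψA ψB hψB ψAB hψAB

end
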